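/- arXiv:1011.4242 — 3 statements merged into one kernel-verified Lean document; each statement's English description precedes it below -/
import Mathlib

section
/- Fix 0 < ε < 3/e − 1. For k ∈ ℕ, let X₁(k), X₂(k), … be i.i.d. Poisson random variables with mean (1+ε)·log k. Then for every constant C > 0, P(max_{1 ≤ i ≤ ⌊Ck⌋} X_i(k) ≤ 3·log k) → 1 as k → ∞. -/
/-!
Chernoff's bound for the Poisson law, `P(X ≥ m) ≤ e^{-λ} (eλ/m)^m`, with `m = ⌊3 log k⌋ + 1`
and `λ = (1+ε) log k`: the hypothesis `ε < 3/e - 1` says exactly that `eλ ≤ 3 log k < m`, so each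
`X_i(k)` exceeds `3 log k` with probability at most `e^{-λ} = k^{-(1+ε)}`. A union bound over the
`⌊Ck⌋` variables leaves a failure probability of at most `C k^{-ε} → 0`.
-/

open MeasureTheory ProbabilityTheory Filter Topology Real
open scoped ENNReal Nat

theorem tsum_pow_add_div_factorial_le {r : ℝ} {m : ℕ} (hr : 0 ≤ r) (hm : 0 < m)
    (hrm : r ≤ m) :
    ∑' j, r ^ (j + m) / (j + m)! ≤ (exp 1 * r / m) ^ m := by
  have hm' : (0 : ℝ) < m := Nat.cast_pos.mpr hm
  have hsummable : Summable fun n : ℕ => (m : ℝ) ^ n / n ! := Real.summable_pow_div_factorial _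
  have hterm : ∀ j, r ^ (j + m) / (j + m)! ≤ (r / m) ^ m * ((m : ℝ) ^ (j + m) / (j + m)!) := by
    intro j
    have hpow : (r / m) ^ (j + m) ≤ (r / m) ^ m :=
      pow_le_pow_of_le_one (by positivity) ((div_le_one hm').mpr hrm) (Nat.le_add_left m j)
    calc r ^ (j + m) / (j + m)! = (r / m) ^ (j + m) * ((m : ℝ) ^ (j + m) / (j + m)!) := by
          rw [← mul_div_assoc, div_pow, div_mul_cancel₀ _ (pow_ne_zero _ hm'.ne')]
      _ ≤ (r / m) ^ m * ((m : ℝ) ^ (j + m) / (j + m)!) := by gcongr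
  have htail : ∑' j, (m : ℝ) ^ (j + m) / (j + m)! ≤ exp m := by
    rw [Real.exp_eq_exp_ℝ, (NormedSpace.expSeries_div_hasSum_exp (m : ℝ)).tsum_eq.symm]
    exact tsum_comp_le_tsum_of_inj hsummable (fun n => by positivity) (add_left_injective m)
  calc ∑' j, r ^ (j + m) / (j + m)!
      ≤ ∑' j, (r / m) ^ m * ((m : ℝ) ^ (j + m) / (j + m)!) :=
        Summable.tsum_le_tsum hterm
          ((summable_nat_add_iff m).mpr (Real.summable_pow_div_factorial r))
          (((summable_nat_add_iff m).mpr hsummable).mul_left _)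
    _ ≤ (r / m) ^ m * exp m := by
        rw [tsum_mul_left]
        gcongr
    _ = (exp 1 * r / m) ^ m := by
        rw [← Real.exp_one_pow, ← mul_pow]
        ring

theorem measure_ge_le_tsum_measure_eq_add {Ω : Type*} [MeasurableSpace Ω] (μ : Measure Ω)
    (X : Ω → ℕ) (m : ℕ) :
    μ {ω | m ≤ X ω} ≤ ∑' j, μ {ω | X ω = j + m} :=
  calc μ {ω | m ≤ X ω} ≤ μ (⋃ j, {ω | X ω = j + m}) :=
        measure_mono fun ω (hω : m ≤ X ω) => Set.mem_iUnion.mpr ⟨X ω - m, by simp; omega⟩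
    _ ≤ ∑' j, μ {ω | X ω = j + m} := measure_iUnion_le _

theorem measure_ge_le_of_poisson {Ω : Type*} [MeasurableSpace Ω] (μ : Measure Ω)
    [IsFiniteMeasure μ] {X : Ω → ℕ} {r : ℝ} (hr : 0 ≤ r)
    (hX : ∀ j : ℕ, (μ {ω | X ω = j}).toReal = exp (-r) * r ^ j / j !)
    {m : ℕ} (hm : 0 < m) (hrm : r ≤ m) :
    μ {ω | m ≤ X ω} ≤ ENNReal.ofReal (exp (-r) * (exp 1 * r / m) ^ m) := by
  have hsummable : Summable fun j : ℕ => exp (-r) * r ^ (j + m) / (j + m)! := by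
    simpa only [mul_div_assoc] using
      ((summable_nat_add_iff m).mpr (Real.summable_pow_div_factorial r)).mul_left (exp (-r))
  calc μ {ω | m ≤ X ω} ≤ ∑' j, μ {ω | X ω = j + m} := measure_ge_le_tsum_measure_eq_add μ X m
    _ = ∑' j, ENNReal.ofReal (exp (-r) * r ^ (j + m) / (j + m)!) := by
        refine tsum_congr fun j => ?_
        rw [← ENNReal.ofReal_toReal (measure_ne_top μ _), hX]
    _ = ENNReal.ofReal (exp (-r) * ∑' j, r ^ (j + m) / (j + m)!) := by
        rw [← ENNReal.ofReal_tsum_of_nonneg (fun j => by positivity) hsummable, ← tsum_mul_left]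
        simp only [mul_div_assoc]
    _ ≤ ENNReal.ofReal (exp (-r) * (exp 1 * r / m) ^ m) := by
        gcongr
        exact tsum_pow_add_div_factorial_le hr hm hrm

theorem measure_gt_le_of_poisson {Ω : Type*} [MeasurableSpace Ω] (μ : Measure Ω)
    [IsFiniteMeasure μ] {X : Ω → ℕ} {r : ℝ} (hr : 0 ≤ r)
    (hX : ∀ j : ℕ, (μ {ω | X ω = j}).toReal = exp (-r) * r ^ j / j !)
    {t : ℝ} (hrt : exp 1 * r ≤ t) :
    μ {ω | t < X ω} ≤ ENNReal.ofReal (exp (-r)) := by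
  have ht : 0 ≤ t := le_trans (by positivity) hrt
  set m := ⌊t⌋₊ + 1
  have htm : t < m := by simpa [m] using Nat.lt_floor_add_one t
  have hsub : {ω | t < X ω} ⊆ {ω | m ≤ X ω} := fun ω (hω : t < X ω) =>
    Nat.succ_le_of_lt ((Nat.floor_lt ht).mpr hω)
  calc μ {ω | t < X ω} ≤ μ {ω | m ≤ X ω} := measure_mono hsub
    _ ≤ ENNReal.ofReal (exp (-r) * (exp 1 * r / m) ^ m) :=
        measure_ge_le_of_poisson μ hr hX (Nat.succ_pos ⌊t⌋₊)
          ((le_mul_of_one_le_left hr (by linarith [add_one_le_exp (1 : ℝ)])).trans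
            (hrt.trans htm.le))
    _ ≤ ENNReal.ofReal (exp (-r)) := by
        gcongr
        refine mul_le_of_le_one_right (exp_pos _).le (pow_le_one₀ (by positivity) ?_)
        exact (div_le_one (by positivity)).mpr (hrt.trans htm.le)

theorem one_sub_card_mul_le_measure_forall_le {Ω ι : Type*} [MeasurableSpace Ω]
    (μ : Measure Ω) [IsProbabilityMeasure μ] (s : Finset ι) (Y : ι → Ω → ℝ) (t : ℝ)
    (δ : ℝ≥0∞) (h : ∀ i ∈ s, μ {ω | t < Y i ω} ≤ δ) :
    1 - s.card * δ ≤ μ {ω | ∀ i ∈ s, Y i ω ≤ t} := by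
  set A := {ω | ∀ i ∈ s, Y i ω ≤ t}
  have hcompl : μ Aᶜ ≤ s.card * δ :=
    calc μ Aᶜ ≤ μ (⋃ i ∈ s, {ω | t < Y i ω}) := measure_mono fun ω hω => by
          simpa [A] using hω
      _ ≤ ∑ i ∈ s, μ {ω | t < Y i ω} := measure_biUnion_finset_le s _
      _ ≤ s.card * δ := by simpa using Finset.sum_le_card_nsmul s _ δ h
  calc 1 - s.card * δ ≤ 1 - μ Aᶜ := tsub_le_tsub_left hcompl 1
    _ ≤ μ A := by
        rw [tsub_le_iff_right, ← measure_univ (μ := μ), ← Set.union_compl_self A]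
        exact measure_union_le A Aᶜ

theorem floor_mul_mul_exp_neg_mul_log_le {C x ε : ℝ} (hC : 0 ≤ C) (hx : 0 < x) :
    ⌊C * x⌋₊ * exp (-((1 + ε) * log x)) ≤ C * x ^ (-ε) := by
  have hexp : exp (-((1 + ε) * log x)) = x ^ (-ε) / x := by
    rw [rpow_def_of_pos hx, eq_div_iff hx.ne', ← exp_log hx, ← exp_add, exp_log hx]
    ring_nf
  calc (⌊C * x⌋₊ : ℝ) * exp (-((1 + ε) * log x)) ≤ C * x * (x ^ (-ε) / x) := by
        rw [hexp]
        gcongr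
        exact Nat.floor_le (by positivity)
    _ = C * x ^ (-ε) := by field_simp

theorem stmt_5_general {Ω : Type*} [MeasurableSpace Ω] (μ : Measure Ω) [IsProbabilityMeasure μ]
    (ε : ℝ) (hε : 0 < ε) (hε' : ε < 3 / Real.exp 1 - 1)
    (X : ℕ → ℕ → Ω → ℕ)
    (hpois : ∀ k : ℕ, 1 ≤ k → ∀ i j : ℕ, (μ {ω | X k i ω = j}).toReal
      = Real.exp (-((1 + ε) * Real.log k)) * ((1 + ε) * Real.log k) ^ j / Nat.factorial j) :
    ∀ C : ℝ, 0 < C →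
      Tendsto (fun k : ℕ =>
          μ {ω | ∀ i ∈ Finset.Icc 1 ⌊C * (k : ℝ)⌋₊, (X k i ω : ℝ) ≤ 3 * Real.log k})
        atTop (𝓝 (1 : ℝ≥0∞)) := by
  intro C hC
  have hrate : exp 1 * (1 + ε) ≤ 3 := by
    have := (lt_div_iff₀' (exp_pos 1)).mp (by linarith : 1 + ε < 3 / exp 1)
    linarith
  have hlower : ∀ᶠ k : ℕ in atTop, 1 - ENNReal.ofReal (C * (k : ℝ) ^ (-ε)) ≤
      μ {ω | ∀ i ∈ Finset.Icc 1 ⌊C * (k : ℝ)⌋₊, (X k i ω : ℝ) ≤ 3 * Real.log k} := by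
    filter_upwards [eventually_ge_atTop 1] with k hk
    have hk' : (0 : ℝ) < k := by exact_mod_cast hk
    have hL : 0 ≤ log k := log_nonneg (by exact_mod_cast hk)
    refine le_trans (tsub_le_tsub_left ?_ 1) (one_sub_card_mul_le_measure_forall_le μ _ _ _ _
      fun i _ => measure_gt_le_of_poisson μ (by positivity) (hpois k hk i)
        (by nlinarith : exp 1 * ((1 + ε) * log k) ≤ 3 * log k))
    rw [Nat.card_Icc, Nat.add_sub_cancel, ← ENNReal.ofReal_natCast, ← ENNReal.ofReal_mul
      (Nat.cast_nonneg _)]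
    exact ENNReal.ofReal_le_ofReal (floor_mul_mul_exp_neg_mul_log_le hC.le hk')
  have hbound : Tendsto (fun k : ℕ => C * (k : ℝ) ^ (-ε)) atTop (𝓝 0) := by
    simpa using ((tendsto_rpow_neg_atTop hε).comp tendsto_natCast_atTop_atTop).const_mul C
  have hlim : Tendsto (fun k : ℕ => 1 - ENNReal.ofReal (C * (k : ℝ) ^ (-ε))) atTop (𝓝 1) := by
    simpa using ENNReal.Tendsto.sub tendsto_const_nhds (ENNReal.tendsto_ofReal hbound)
      (Or.inl ENNReal.one_ne_top)
  exact tendsto_of_tendsto_of_tendsto_of_le_of_le' hlim tendsto_const_nhds hlower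
    (Eventually.of_forall fun k => prob_le_one)

/-- Fix `0 < ε < 3/e - 1`. If, for each `k`, `X k 1, X k 2, …` are i.i.d. Poisson random
variables with mean `(1+ε)·log k`, then for every `C > 0`,
`P(max_{1 ≤ i ≤ ⌊Ck⌋} X k i ≤ 3·log k) → 1` as `k → ∞`. -/
theorem stmt_5 {Ω : Type*} [MeasurableSpace Ω] (μ : Measure Ω) [IsProbabilityMeasure μ]
    (ε : ℝ) (hε : 0 < ε) (hε' : ε < 3 / Real.exp 1 - 1)
    (X : ℕ → ℕ → Ω → ℕ) (hmeas : ∀ k i, Measurable (X k i))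
    (hindep : ∀ k, iIndepFun (X k) μ)
    (hpois : ∀ k : ℕ, 1 ≤ k → ∀ i j : ℕ, (μ {ω | X k i ω = j}).toReal
      = Real.exp (-((1 + ε) * Real.log k)) * ((1 + ε) * Real.log k) ^ j / Nat.factorial j) :
    ∀ C : ℝ, 0 < C →
      Tendsto (fun k : ℕ =>
          μ {ω | ∀ i ∈ Finset.Icc 1 ⌊C * (k : ℝ)⌋₊, (X k i ω : ℝ) ≤ 3 * Real.log k})
        atTop (𝓝 (1 : ℝ≥0∞)) :=
  stmt_5_general μ ε hε hε' X hpois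
end

section
/- Let A₁, A₂, … be i.i.d. nonnegative random variables with mean μ ∈ (0, ∞), and set L^{(n)} = Σ_{i=1}^n A_i. Then L^{(n)}/(μn) → 1 almost surely as n → ∞, and moreover (L^{(n)} − Σ_{i=1}^n A_i·1(A_i ≤ log n))/L^{(n)} → 0 almost surely as n → ∞. -/
open MeasureTheory ProbabilityTheory Filter Topology

/-!
The first limit is the strong law of large numbers. For the second, the numerator is the sum of
the upper tails `A i · 1(A i > log n)`. Since `log n → ∞`, for each fixed `M` these eventually
sit below the tails `A i · 1(A i > M)`, whose averages converge almost surely (again by the strong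
law, simultaneously for all `M ∈ ℕ`) to `E[A 0 · 1(A 0 > M)]`, and this tends to `0` as `M → ∞` by
dominated convergence. Hence the tail sum is `o(n)`, while the total sum grows like `E[A 0] · n`.
-/

open Set

lemma indicator_Ioi_id_le_of_le {M t x : ℝ} (hx : 0 ≤ x) (hMt : M ≤ t) :
    (Ioi t).indicator id x ≤ (Ioi M).indicator id x := by
  simp only [indicator_apply, mem_Ioi, id]
  split_ifs <;> linarith

lemma sub_mul_ite_le_eq_indicator_Ioi (x t : ℝ) :
    x - x * (if x ≤ t then 1 else 0) = (Ioi t).indicator id x := by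
  by_cases h : x ≤ t
  · simp [h]
  · simp [h, not_le.mp h]

lemma tendsto_avg_indicator_Ioi_of_tendsto_atTop {a : ℕ → ℝ} (ha : ∀ i, 0 ≤ a i) {c : ℕ → ℝ}
    (hc : Tendsto c atTop (𝓝 0))
    (hlim : ∀ M : ℕ, Tendsto
      (fun n : ℕ => (∑ i ∈ Finset.range n, (Ioi (M : ℝ)).indicator id (a i)) / n)
      atTop (𝓝 (c M)))
    {t : ℕ → ℝ} (ht : Tendsto t atTop atTop) :
    Tendsto (fun n : ℕ => (∑ i ∈ Finset.range n, (Ioi (t n)).indicator id (a i)) / n)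
      atTop (𝓝 0) := by
  rw [tendsto_order]
  refine ⟨fun b hb => Eventually.of_forall fun n => hb.trans_le ?_, fun b hb => ?_⟩
  · exact div_nonneg (Finset.sum_nonneg fun i _ => indicator_apply_nonneg fun _ => ha i)
      n.cast_nonneg
  obtain ⟨M, hM⟩ := (hc.eventually (gt_mem_nhds (half_pos hb))).exists
  filter_upwards [ht.eventually_ge_atTop (M : ℝ),
    (hlim M).eventually (gt_mem_nhds (lt_add_of_pos_right (c M) (half_pos hb)))] with n htn hn
  calc (∑ i ∈ Finset.range n, (Ioi (t n)).indicator id (a i)) / n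
      ≤ (∑ i ∈ Finset.range n, (Ioi (M : ℝ)).indicator id (a i)) / n := 
        div_le_div_of_nonneg_right (Finset.sum_le_sum fun i _ =>
          indicator_Ioi_id_le_of_le (ha i) htn) n.cast_nonneg
    _ < c M + b / 2 := hn
    _ < b := by linarith

section Probability

variable {Ω : Type*} [MeasurableSpace Ω] {μ : Measure Ω}

lemma MeasureTheory.Integrable.indicator_Ioi_comp {X : Ω → ℝ} (hX : Integrable X μ) (M : ℝ) :
    Integrable (fun ω => (Ioi M).indicator id (X ω)) μ :=
  hX.mono ((measurable_id.indicator measurableSet_Ioi).comp_aemeasurable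
    hX.aemeasurable).aestronglyMeasurable
    (Eventually.of_forall fun _ => norm_indicator_le_norm_self _ _)

lemma tendsto_integral_indicator_Ioi_atTop {X : Ω → ℝ} (hX : Integrable X μ) :
    Tendsto (fun M : ℕ => ∫ ω, (Ioi (M : ℝ)).indicator id (X ω) ∂μ) atTop (𝓝 0) := by
  have hlim : ∀ ω, Tendsto (fun M : ℕ => (Ioi (M : ℝ)).indicator id (X ω)) atTop (𝓝 0) :=
    fun ω => tendsto_const_nhds.congr' <| by
      filter_upwards [eventually_ge_atTop ⌈X ω⌉₊] with M hM
      exact (indicator_of_notMem (not_lt.mpr ((Nat.le_ceil _).trans (by exact_mod_cast hM))) _).symm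
  simpa using tendsto_integral_of_dominated_convergence (fun ω => ‖X ω‖)
    (fun M => (hX.indicator_Ioi_comp M).aestronglyMeasurable) hX.norm
    (fun M => Eventually.of_forall fun _ => norm_indicator_le_norm_self _ _)
    (Eventually.of_forall hlim)

lemma ae_forall_tendsto_avg_comp {ι : Type*} [Countable ι] {X : ℕ → Ω → ℝ}
    (hindep : Pairwise (Function.onFun (· ⟂ᵢ[μ] ·) X)) (hident : ∀ i, IdentDistrib (X i) (X 0) μ μ)
    (g : ι → ℝ → ℝ) (hg : ∀ k, Measurable (g k)) (hgint : ∀ k, Integrable (fun ω => g k (X 0 ω)) μ) :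
    ∀ᵐ ω ∂μ, ∀ k, Tendsto (fun n : ℕ => (∑ i ∈ Finset.range n, g k (X i ω)) / n)
      atTop (𝓝 (∫ ω, g k (X 0 ω) ∂μ)) :=
  ae_all_iff.mpr fun k => strong_law_ae_real (fun i => g k ∘ X i) (hgint k)
    (fun _ _ hij => (hindep hij).comp (hg k) (hg k)) (fun i => (hident i).comp (hg k))

end Probability

theorem stmt_10_general {Ω : Type*} [MeasurableSpace Ω] (μ : Measure Ω)
    (A : ℕ → Ω → ℝ)
    (hnonneg : ∀ i ω, 0 ≤ A i ω)
    (hindep : iIndepFun A μ)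
    (hident : ∀ i, IdentDistrib (A i) (A 0) μ μ)
    (hint : Integrable (A 0) μ) (hmean : 0 < ∫ ω, A 0 ω ∂μ) :
    ∀ᵐ ω ∂μ,
      Tendsto (fun n : ℕ =>
          (∑ i ∈ Finset.range n, A i ω) / ((∫ ω', A 0 ω' ∂μ) * n)) atTop (𝓝 1) ∧
      Tendsto (fun n : ℕ =>
          ((∑ i ∈ Finset.range n, A i ω)
              - ∑ i ∈ Finset.range n, A i ω * (if A i ω ≤ Real.log n then 1 else 0))
            / ∑ i ∈ Finset.range n, A i ω) atTop (𝓝 0) := by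
  have hpair : Pairwise (Function.onFun (· ⟂ᵢ[μ] ·) A) := fun _ _ hij => hindep.indepFun hij
  filter_upwards [strong_law_ae_real A hint hpair hident,
    ae_forall_tendsto_avg_comp hpair hident (fun M : ℕ => (Ioi (M : ℝ)).indicator id)
      (fun _ => measurable_id.indicator measurableSet_Ioi) (fun M => hint.indicator_Ioi_comp M)]
    with ω hsum htails
  refine ⟨?_, ?_⟩
  · simpa [div_div, mul_comm, div_self hmean.ne'] using hsum.div_const (∫ ω, A 0 ω ∂μ)
  have htail : Tendsto (fun n : ℕ =>
      (∑ i ∈ Finset.range n, (Ioi (Real.log n)).indicator id (A i ω)) / n) atTop (𝓝 0) :=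
    tendsto_avg_indicator_Ioi_of_tendsto_atTop (hnonneg · ω)
      (tendsto_integral_indicator_Ioi_atTop hint) htails
      (Real.tendsto_log_atTop.comp tendsto_natCast_atTop_atTop)
  refine (zero_div (∫ ω, A 0 ω ∂μ) ▸ htail.div hsum hmean.ne').congr' ?_
  filter_upwards [eventually_ne_atTop 0] with n hn
  rw [← Finset.sum_sub_distrib]
  simp only [sub_mul_ite_le_eq_indicator_Ioi]
  exact div_div_div_cancel_right₀ (Nat.cast_ne_zero.mpr hn) _ _

/-- For i.i.d. nonnegative random variables `A i` with mean `μA ∈ (0,∞)` and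
`L n = Σ_{i<n} A i`: almost surely `L n/(μA·n) → 1` and
`(L n - Σ_{i<n} A i·1(A i ≤ log n))/L n → 0` as `n → ∞`. -/
theorem stmt_10 {Ω : Type*} [MeasurableSpace Ω] (μ : Measure Ω) [IsProbabilityMeasure μ]
    (A : ℕ → Ω → ℝ) (hmeas : ∀ i, Measurable (A i))
    (hnonneg : ∀ i ω, 0 ≤ A i ω)
    (hindep : iIndepFun A μ)
    (hident : ∀ i, IdentDistrib (A i) (A 0) μ μ)
    (hint : Integrable (A 0) μ) (hmean : 0 < ∫ ω, A 0 ω ∂μ) :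
    ∀ᵐ ω ∂μ,
      Tendsto (fun n : ℕ =>
          (∑ i ∈ Finset.range n, A i ω) / ((∫ ω', A 0 ω' ∂μ) * n)) atTop (𝓝 1) ∧
      Tendsto (fun n : ℕ =>
          ((∑ i ∈ Finset.range n, A i ω)
              - ∑ i ∈ Finset.range n, A i ω * (if A i ω ≤ Real.log n then 1 else 0))
            / ∑ i ∈ Finset.range n, A i ω) atTop (𝓝 0) :=
  stmt_10_general μ A hnonneg hindep hident hint hmean
end

section
/- Let û = (û_i, i ∈ ℤ≥0) be a nonincreasing sequence with û_i ∈ [0,1] for all i. Then for every m ∈ ℤ≥0, the Gontcharoff polynomial satisfies G_m(1|û) ≥ ∏_{i=0}^{m−1}(1 − û_i)/m! ≥ 0, and G_m(1|û) > 0 whenever û_i < 1 for all i < m. -/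
open MeasureTheory intervalIntegral

/-- The iterated-integral form of the Gontcharoff polynomial `G_m(x|u)`:
`∫_{u 0}^x ∫_{u 1}^{ξ₀} ⋯ ∫_{u (m-1)}^{ξ_{m-2}} dξ_{m-1}⋯dξ₀`, with value `1` for `m = 0`. -/
noncomputable def gonInt : (ℕ → ℝ) → ℕ → ℝ → ℝ
  | _, 0, _ => 1
  | u, m + 1, x => ∫ ξ in (u 0)..x, gonInt (fun i => u (i + 1)) m ξ

lemma gonInt_continuous : ∀ (m : ℕ) (u : ℕ → ℝ), Continuous (gonInt u m)
  | 0, u => by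
    have : gonInt u 0 = fun _ => (1:ℝ) := rfl
    rw [this]; exact continuous_const
  | m + 1, u => by
    have h := gonInt_continuous m (fun i => u (i + 1))
    have he : gonInt u (m+1) = fun x => ∫ ξ in (u 0)..x, gonInt (fun i => u (i + 1)) m ξ := rfl
    rw [he]
    exact intervalIntegral.continuous_primitive (fun a b => h.intervalIntegrable a b) (u 0)

lemma gonInt_key : ∀ (m : ℕ) (u : ℕ → ℝ), Antitone u → ∀ x : ℝ, u 0 ≤ x →
    (∏ i ∈ Finset.range m, (x - u i)) / (Nat.factorial m) ≤ gonInt u m x := by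
  intro m
  induction m with
  | zero => intro u _ x _; simp [gonInt]
  | succ m ih =>
    intro u hanti x hx
    set u' : ℕ → ℝ := fun i => u (i + 1) with hu'def
    have hu' : Antitone u' := fun a b hab => hanti (by omega)
    have hG : gonInt u (m+1) x = ∫ ξ in (u 0)..x, gonInt u' m ξ := rfl
    rcases eq_or_lt_of_le hx with heq | hlt
    · -- x = u 0 : both sides are 0
      have hz : (∏ i ∈ Finset.range (m+1), (x - u i)) = 0 := by
        apply Finset.prod_eq_zero (Finset.mem_range.mpr (Nat.succ_pos m))
        rw [← heq]; ring
      rw [hz, hG, ← heq, intervalIntegral.integral_same]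
      simp
    · set C : ℝ := ∏ i ∈ Finset.range m, (x - u' i) with hC
      have hCnn : 0 ≤ C := by
        apply Finset.prod_nonneg
        intro i _
        have : u' i ≤ u 0 := hanti (by omega)
        linarith
      -- pointwise inequality
      have hptw : ∀ ξ ∈ Set.Icc (u 0) x,
          (ξ - u 0) ^ m * C ≤ (x - u 0) ^ m * ((Nat.factorial m) * gonInt u' m ξ) := by
        intro ξ hξ
        obtain ⟨hξ1, hξ2⟩ := hξ
        have hih : (∏ i ∈ Finset.range m, (ξ - u' i)) / (Nat.factorial m) ≤ gonInt u' m ξ := by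
          apply ih u' hu' ξ
          exact le_trans (hanti (by omega : (0:ℕ) ≤ 1)) hξ1
        have hfac : (0:ℝ) < (Nat.factorial m) := by
          exact_mod_cast Nat.factorial_pos m
        have h1 : (∏ i ∈ Finset.range m, (ξ - u' i)) ≤ (Nat.factorial m) * gonInt u' m ξ := by
          rw [div_le_iff₀ hfac] at hih
          linarith [hih]
        have h2 : (ξ - u 0) ^ m * C ≤ (x - u 0) ^ m * ∏ i ∈ Finset.range m, (ξ - u' i) := by
          have hl : (ξ - u 0) ^ m * C = ∏ i ∈ Finset.range m, ((ξ - u 0) * (x - u' i)) := by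
            rw [hC, Finset.prod_mul_distrib, Finset.prod_const, Finset.card_range]
          have hr : (x - u 0) ^ m * (∏ i ∈ Finset.range m, (ξ - u' i))
              = ∏ i ∈ Finset.range m, ((x - u 0) * (ξ - u' i)) := by
            rw [Finset.prod_mul_distrib, Finset.prod_const, Finset.card_range]
          rw [hl, hr]
          apply Finset.prod_le_prod
          · intro i _
            have h3 : u' i ≤ u 0 := hanti (by omega)
            nlinarith
          · intro i _
            have h3 : u' i ≤ u 0 := hanti (by omega)
            nlinarith
        have h4 : (0:ℝ) ≤ (x - u 0) ^ m := pow_nonneg (by linarith) m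
        calc (ξ - u 0) ^ m * C ≤ (x - u 0) ^ m * ∏ i ∈ Finset.range m, (ξ - u' i) := h2
          _ ≤ (x - u 0) ^ m * ((Nat.factorial m) * gonInt u' m ξ) :=
            mul_le_mul_of_nonneg_left h1 h4
      -- integrate
      have hcont := gonInt_continuous m u'
      have hint : ∫ ξ in (u 0)..x, (ξ - u 0) ^ m * C
          ≤ ∫ ξ in (u 0)..x, (x - u 0) ^ m * ((Nat.factorial m) * gonInt u' m ξ) := by
        apply intervalIntegral.integral_mono_on hx
        · exact (Continuous.intervalIntegrable (by continuity) _ _)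
        · exact (Continuous.intervalIntegrable (by continuity) _ _)
        · exact hptw
      have hL : ∫ ξ in (u 0)..x, (ξ - u 0) ^ m * C
          = (x - u 0) ^ (m + 1) / (m + 1) * C := by
        rw [intervalIntegral.integral_mul_const]
        have : ∫ ξ in (u 0)..x, (ξ - u 0) ^ m
            = ∫ ξ in (u 0 - u 0)..(x - u 0), ξ ^ m :=
          intervalIntegral.integral_comp_sub_right (fun ξ => ξ ^ m) (u 0)
        rw [this, integral_pow]
        simp
      have hR : ∫ ξ in (u 0)..x, (x - u 0) ^ m * ((Nat.factorial m) * gonInt u' m ξ)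
          = (x - u 0) ^ m * ((Nat.factorial m) * gonInt u (m+1) x) := by
        rw [intervalIntegral.integral_const_mul, intervalIntegral.integral_const_mul, hG]
      rw [hL, hR] at hint
      -- finish
      have hprod : (∏ i ∈ Finset.range (m+1), (x - u i)) = C * (x - u 0) := by
        rw [Finset.prod_range_succ']
      have hfac : (0:ℝ) < (Nat.factorial m) := by exact_mod_cast Nat.factorial_pos m
      have hfacS : ((Nat.factorial (m+1) : ℝ)) = ((m:ℝ) + 1) * (Nat.factorial m) := by
        rw [Nat.factorial_succ]; push_cast; ring
      have hpow : (0:ℝ) < (x - u 0) ^ m := pow_pos (by linarith) m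
      rw [hprod, hfacS, div_le_iff₀ (by positivity)]
      have h5 : (x - u 0) / ((m:ℝ) + 1) * C
          ≤ (Nat.factorial m) * gonInt u (m+1) x := by
        have h6 : (x - u 0) ^ m * ((x - u 0) / ((m:ℝ) + 1) * C)
            ≤ (x - u 0) ^ m * ((Nat.factorial m) * gonInt u (m+1) x) := by
          calc (x - u 0) ^ m * ((x - u 0) / ((m:ℝ) + 1) * C)
              = (x - u 0) ^ (m + 1) / ((m:ℝ) + 1) * C := by ring
            _ ≤ _ := hint
        exact le_of_mul_le_mul_left h6 hpow
      calc C * (x - u 0) = ((m:ℝ) + 1) * ((x - u 0) / ((m:ℝ) + 1) * C) := by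
            field_simp
        _ ≤ ((m:ℝ) + 1) * ((Nat.factorial m) * gonInt u (m+1) x) :=
            mul_le_mul_of_nonneg_left h5 (by positivity)
        _ = gonInt u (m+1) x * (((m:ℝ) + 1) * (Nat.factorial m)) := by ring

/-- For a nonincreasing sequence `u` with values in `[0,1]`, the Gontcharoff polynomial
satisfies `G_m(1|u) ≥ ∏_{i<m}(1-u_i)/m! ≥ 0`, and `G_m(1|u) > 0` whenever `u_i < 1` for
all `i < m`. -/
theorem stmt_12 (u : ℕ → ℝ) (hanti : Antitone u) (hmem : ∀ i, u i ∈ Set.Icc (0:ℝ) 1) :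
    ∀ m : ℕ,
      (∏ i ∈ Finset.range m, (1 - u i)) / (Nat.factorial m) ≤ gonInt u m 1 ∧
      0 ≤ (∏ i ∈ Finset.range m, (1 - u i)) / (Nat.factorial m) ∧
      ((∀ i < m, u i < 1) → 0 < gonInt u m 1) := by
  intro m
  have h1 := gonInt_key m u hanti 1 (hmem 0).2
  have hfac : (0:ℝ) < (Nat.factorial m) := by exact_mod_cast Nat.factorial_pos m
  refine ⟨h1, ?_, ?_⟩
  · apply div_nonneg _ (le_of_lt hfac)
    apply Finset.prod_nonneg
    intro i _
    linarith [(hmem i).2]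
  · intro hstrict
    have hprodpos : 0 < ∏ i ∈ Finset.range m, (1 - u i) := by
      apply Finset.prod_pos
      intro i hi
      have := hstrict i (Finset.mem_range.mp hi)
      linarith
    calc (0:ℝ) < (∏ i ∈ Finset.range m, (1 - u i)) / (Nat.factorial m) := by positivity
      _ ≤ gonInt u m 1 := h1
end
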